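/- arXiv:1901.01469 — 5 statements merged into one kernel-verified Lean document; each statement's English description precedes it below -/
import Mathlib

section
/- Let (x̄,λ̄) be a solution of the KKT system ∇_xL(x,λ) = 0, λ ∈ ∂θ(Φ(x)) for the ENLP, and assume the second-order sufficient condition holds: ⟨∇²_{xx}L(x̄,λ̄)w, w⟩ + 2θ_{K,B}(∇Φ(x̄)w) > 0 for every w ∈ ℝ^n \ {0} with ∇Φ(x̄)w ∈ K* + rge B. Then λ̄ is a noncritical Lagrange multiplier for the KKT system corresponding to x̄, i.e., the only ξ ∈ ℝ^n satisfying 0 ∈ ∇²_{xx}L(x̄,λ̄)ξ + ∇Φ(x̄)* D(∂θ)(Φ(x̄),λ̄)(∇Φ(x̄)ξ) is ξ = 0. -/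
open Filter Topology Metric Set Pointwise
open scoped RealInnerProductSpace

noncomputable section

/-- Euclidean space ℝ^k. -/
abbrev Evec (k : ℕ) : Type := EuclideanSpace ℝ (Fin k)

/-- The Bouligand tangent cone to `Ω` at `z`: limits of `α_k (z_k - z)` with
`z_k → z` in `Ω` and `α_k ≥ 0`. -/
def bTangentCone {F : Type*} [NormedAddCommGroup F] [NormedSpace ℝ F]
    (Ω : Set F) (z : F) : Set F :=
  {w | ∃ (zs : ℕ → F) (a : ℕ → ℝ), (∀ k, zs k ∈ Ω) ∧ (∀ k, 0 ≤ a k) ∧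
    Tendsto zs atTop (𝓝 z) ∧ Tendsto (fun k => a k • (zs k - z)) atTop (𝓝 w)}

/-- Graph of a set-valued mapping. -/
def svGraph {A B : Type*} (F : A → Set B) : Set (A × B) := {p | p.2 ∈ F p.1}

/-- Graphical derivative of a set-valued mapping at `(z, w)` in direction `u`. -/
def gDeriv {A B : Type*} [NormedAddCommGroup A] [NormedSpace ℝ A]
    [NormedAddCommGroup B] [NormedSpace ℝ B]
    (F : A → Set B) (z : A) (w : B) (u : A) : Set B :=
  {v | (u, v) ∈ bTangentCone (svGraph F) (z, w)}

/-- A convex polyhedral set: a finite intersection of closed half-spaces. -/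
def IsPolyhedral {k : ℕ} (Y : Set (Evec k)) : Prop :=
  ∃ (p : ℕ) (b : Fin p → Evec k) (c : Fin p → ℝ), Y = {y | ∀ i, ⟪b i, y⟫ ≤ c i}

/-- The piecewise linear-quadratic penalty θ_{Y,B}. -/
def thetaY {k : ℕ} (Y : Set (Evec k)) (B : Evec k →L[ℝ] Evec k) (u : Evec k) : EReal :=
  ⨆ y ∈ Y, ((⟪y, u⟫ - (1 / 2) * ⟪y, B y⟫ : ℝ) : EReal)

/-- Subdifferential of convex analysis of an extended-real-valued function. -/
def subdiff {k : ℕ} (θ : Evec k → EReal) (z : Evec k) : Set (Evec k) :=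
  {v | ∀ u, θ z + ((⟪v, u - z⟫ : ℝ) : EReal) ≤ θ u}

/-- Polar cone. -/
def polarCone {k : ℕ} (K : Set (Evec k)) : Set (Evec k) :=
  {v | ∀ w ∈ K, ⟪v, w⟫ ≤ 0}

/-- Normal cone of convex analysis. -/
def convNormalCone {k : ℕ} (Ω : Set (Evec k)) (z : Evec k) : Set (Evec k) :=
  {v | ∀ w ∈ Ω, ⟪v, w - z⟫ ≤ 0}

/-- The critical cone K = T_Y(lmo) ∩ {zo - Blmo}^⊥. -/
def critCone {k : ℕ} (Y : Set (Evec k)) (B : Evec k →L[ℝ] Evec k)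
    (zo lmo : Evec k) : Set (Evec k) :=
  bTangentCone Y lmo ∩ {w | ⟪zo - B lmo, w⟫ = 0}

/-- Calmness of a set-valued mapping at a graph point. -/
def Calm {A B : Type*} [NormedAddCommGroup A] [NormedAddCommGroup B]
    (F : A → Set B) (zo : A) (wo : B) : Prop :=
  ∃ ℓ : ℝ, 0 ≤ ℓ ∧ ∃ U ∈ 𝓝 zo, ∃ V ∈ 𝓝 wo,
    ∀ z ∈ U, ∀ w ∈ F z ∩ V, ∃ w' ∈ F zo, ‖w - w'‖ ≤ ℓ * ‖z - zo‖

/-- Isolated calmness of a set-valued mapping at a graph point. -/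
def IsolCalm {A B : Type*} [NormedAddCommGroup A] [NormedAddCommGroup B]
    (F : A → Set B) (zo : A) (wo : B) : Prop :=
  ∃ ℓ : ℝ, 0 ≤ ℓ ∧ ∃ U ∈ 𝓝 zo, ∃ V ∈ 𝓝 wo,
    ∀ z ∈ U, ∀ w ∈ F z ∩ V, ‖w - wo‖ ≤ ℓ * ‖z - zo‖

/-- Robust isolated calmness of a set-valued mapping at a graph point. -/
def RobIsolCalm {A B : Type*} [NormedAddCommGroup A] [NormedAddCommGroup B]
    (F : A → Set B) (zo : A) (wo : B) : Prop :=
  ∃ ℓ : ℝ, 0 ≤ ℓ ∧ ∃ U ∈ 𝓝 zo, ∃ V ∈ 𝓝 wo,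
    (∀ z ∈ U, ∀ w ∈ F z ∩ V, ‖w - wo‖ ≤ ℓ * ‖z - zo‖) ∧
    ∀ z ∈ U, (F z ∩ V).Nonempty

/-- Lipschitz-like (Aubin) property of a set-valued mapping around a graph point. -/
def LipLike {A B : Type*} [NormedAddCommGroup A] [NormedAddCommGroup B]
    (F : A → Set B) (zo : A) (wo : B) : Prop :=
  ∃ ℓ : ℝ, 0 ≤ ℓ ∧ ∃ U ∈ 𝓝 zo, ∃ V ∈ 𝓝 wo,
    ∀ z ∈ U, ∀ z' ∈ U, ∀ w ∈ F z' ∩ V, ∃ w' ∈ F z, ‖w - w'‖ ≤ ℓ * ‖z' - z‖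

/-! ### The general variational system -/

/-- Ψ(x,λ) = f(x) + ∇Φ(x)*λ. -/
def Psi {n m : ℕ} (f : Evec n → Evec n) (Φ : Evec n → Evec m)
    (x : Evec n) (lam : Evec m) : Evec n :=
  f x + ContinuousLinearMap.adjoint (fderiv ℝ Φ x) lam

/-- Lagrange multipliers Λ(xo) of the variational system. -/
def LagMult {n m : ℕ} (Y : Set (Evec m)) (B : Evec m →L[ℝ] Evec m)
    (f : Evec n → Evec n) (Φ : Evec n → Evec m) (xo : Evec n) : Set (Evec m) :=
  {lam | Psi f Φ xo lam = 0 ∧ lam ∈ subdiff (thetaY Y B) (Φ xo)}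

/-- Solution map of the canonically perturbed variational system. -/
def SolMap {n m : ℕ} (Y : Set (Evec m)) (B : Evec m →L[ℝ] Evec m)
    (f : Evec n → Evec n) (Φ : Evec n → Evec m) :
    Evec n × Evec m → Set (Evec n × Evec m) :=
  fun p => {q | Psi f Φ q.1 q.2 = p.1 ∧ q.2 ∈ subdiff (thetaY Y B) (Φ q.1 + p.2)}

/-- Multiplier map associated with xo. -/
def MultMap {n m : ℕ} (Y : Set (Evec m)) (B : Evec m →L[ℝ] Evec m)
    (f : Evec n → Evec n) (Φ : Evec n → Evec m) (xo : Evec n) :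
    Evec n × Evec m → Set (Evec m) :=
  fun p => {lam | Psi f Φ xo lam = p.1 ∧ lam ∈ subdiff (thetaY Y B) (Φ xo + p.2)}

/-- lmo is a critical Lagrange multiplier for the variational system. -/
def IsCriticalMult {n m : ℕ} (Y : Set (Evec m)) (B : Evec m →L[ℝ] Evec m)
    (f : Evec n → Evec n) (Φ : Evec n → Evec m) (xo : Evec n) (lmo : Evec m) : Prop :=
  ∃ ξ : Evec n, ξ ≠ 0 ∧
    ∃ η ∈ gDeriv (subdiff (thetaY Y B)) (Φ xo) lmo (fderiv ℝ Φ xo ξ),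
      fderiv ℝ (fun x => Psi f Φ x lmo) xo ξ +
        ContinuousLinearMap.adjoint (fderiv ℝ Φ xo) η = 0

/-- lmo is a noncritical Lagrange multiplier for the variational system. -/
def IsNoncriticalMult {n m : ℕ} (Y : Set (Evec m)) (B : Evec m →L[ℝ] Evec m)
    (f : Evec n → Evec n) (Φ : Evec n → Evec m) (xo : Evec n) (lmo : Evec m) : Prop :=
  ∀ ξ : Evec n, ∀ η ∈ gDeriv (subdiff (thetaY Y B)) (Φ xo) lmo (fderiv ℝ Φ xo ξ),
    fderiv ℝ (fun x => Psi f Φ x lmo) xo ξ +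
      ContinuousLinearMap.adjoint (fderiv ℝ Φ xo) η = 0 → ξ = 0

/-- `u` is the proximal point of `θ` at `z`. -/
def IsProxPt {k : ℕ} (θ : Evec k → EReal) (z u : Evec k) : Prop :=
  ∀ w, θ u + ((1 / 2 * ‖z - u‖ ^ 2 : ℝ) : EReal) ≤ θ w + ((1 / 2 * ‖z - w‖ ^ 2 : ℝ) : EReal)

/-! ### ENLP -/

/-- The Lagrangian of the ENLP. -/
def Lag {n m : ℕ} (B : Evec m →L[ℝ] Evec m) (φ₀ : Evec n → ℝ) (Φ : Evec n → Evec m)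
    (x : Evec n) (lam : Evec m) : ℝ :=
  φ₀ x + ⟪Φ x, lam⟫ - (1 / 2) * ⟪lam, B lam⟫

/-- The essential objective φ = φ₀ + θ∘Φ of the ENLP. -/
def enlpPhi {n m : ℕ} (Y : Set (Evec m)) (B : Evec m →L[ℝ] Evec m)
    (φ₀ : Evec n → ℝ) (Φ : Evec n → Evec m) (x : Evec n) : EReal :=
  ((φ₀ x : ℝ) : EReal) + thetaY Y B (Φ x)

/-- Lagrange multipliers of the ENLP KKT system. -/
def LagMultCom {n m : ℕ} (Y : Set (Evec m)) (B : Evec m →L[ℝ] Evec m)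
    (φ₀ : Evec n → ℝ) (Φ : Evec n → Evec m) (xo : Evec n) : Set (Evec m) :=
  {lam | gradient (fun x => Lag B φ₀ Φ x lam) xo = 0 ∧
    lam ∈ subdiff (thetaY Y B) (Φ xo)}

/-- Solution map of the canonically perturbed KKT system of the ENLP. -/
def SKKT {n m : ℕ} (Y : Set (Evec m)) (B : Evec m →L[ℝ] Evec m)
    (φ₀ : Evec n → ℝ) (Φ : Evec n → Evec m) :
    Evec n × Evec m → Set (Evec n × Evec m) :=
  fun p => {q | gradient (fun x => Lag B φ₀ Φ x q.2) q.1 = p.1 ∧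
    q.2 ∈ subdiff (thetaY Y B) (Φ q.1 + p.2)}

/-- The Hessian ∇²_{xx}L(xo,lmo) as a continuous linear map. -/
def hessL {n m : ℕ} (B : Evec m →L[ℝ] Evec m) (φ₀ : Evec n → ℝ) (Φ : Evec n → Evec m)
    (xo : Evec n) (lmo : Evec m) : Evec n →L[ℝ] Evec n :=
  fderiv ℝ (fun x => gradient (fun x' => Lag B φ₀ Φ x' lmo) x) xo

/-- lmo is a noncritical multiplier of the KKT system of the ENLP. -/
def IsNoncriticalENLP {n m : ℕ} (Y : Set (Evec m)) (B : Evec m →L[ℝ] Evec m)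
    (φ₀ : Evec n → ℝ) (Φ : Evec n → Evec m) (xo : Evec n) (lmo : Evec m) : Prop :=
  ∀ ξ : Evec n, ∀ η ∈ gDeriv (subdiff (thetaY Y B)) (Φ xo) lmo (fderiv ℝ Φ xo ξ),
    hessL B φ₀ Φ xo lmo ξ + ContinuousLinearMap.adjoint (fderiv ℝ Φ xo) η = 0 → ξ = 0

/-- The second-order sufficient condition for the ENLP at (xo,lmo). -/
def SOSC {n m : ℕ} (Y : Set (Evec m)) (B : Evec m →L[ℝ] Evec m)
    (φ₀ : Evec n → ℝ) (Φ : Evec n → Evec m) (xo : Evec n) (lmo : Evec m) : Prop :=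
  ∀ w : Evec n, w ≠ 0 →
    fderiv ℝ Φ xo w ∈ polarCone (critCone Y B (Φ xo) lmo) + Set.range (⇑B) →
    0 < ((⟪hessL B φ₀ Φ xo lmo w, w⟫ : ℝ) : EReal) +
      2 * thetaY (critCone Y B (Φ xo) lmo) B (fderiv ℝ Φ xo w)

/-- xo is a local optimal solution of the ENLP. -/
def IsLocalOptENLP {n m : ℕ} (Y : Set (Evec m)) (B : Evec m →L[ℝ] Evec m)
    (φ₀ : Evec n → ℝ) (Φ : Evec n → Evec m) (xo : Evec n) : Prop :=
  ∃ ε > (0 : ℝ), ∀ x ∈ Metric.closedBall xo ε,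
    enlpPhi Y B φ₀ Φ xo ≤ enlpPhi Y B φ₀ Φ x

/-- The second subderivative d²φ(xo,vo)(wo). -/
def secondSubderiv {k : ℕ} (φ : Evec k → EReal) (xo vo wo : Evec k) : EReal :=
  Filter.liminf
    (fun p : ℝ × Evec k =>
      ((2 / p.1 ^ 2 : ℝ) : EReal) *
        (φ (xo + p.1 • p.2) - φ xo - ((p.1 * ⟪vo, p.2⟫ : ℝ) : EReal)))
    ((𝓝[>] (0 : ℝ)) ×ˢ 𝓝 wo)

/-- The perturbed objective of the ENLP. -/
def pObj {n m : ℕ} (Y : Set (Evec m)) (B : Evec m →L[ℝ] Evec m)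
    (φ₀ : Evec n → ℝ) (Φ : Evec n → Evec m) (p : Evec n × Evec m) (x : Evec n) : EReal :=
  ((φ₀ x - ⟪p.1, x⟫ : ℝ) : EReal) + thetaY Y B (Φ x + p.2)

/-- xo is a fully stable local optimal solution of the ENLP. -/
def FullyStable {n m : ℕ} (Y : Set (Evec m)) (B : Evec m →L[ℝ] Evec m)
    (φ₀ : Evec n → ℝ) (Φ : Evec n → Evec m) (xo : Evec n) : Prop :=
  ∃ γ > (0 : ℝ), ∃ U ∈ 𝓝 (0 : Evec n), ∃ W ∈ 𝓝 (0 : Evec m),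
    ∃ (g : Evec n × Evec m → Evec n) (mg : Evec n × Evec m → ℝ) (ℓ : ℝ), 0 ≤ ℓ ∧
      g (0, 0) = xo ∧
      (∀ p ∈ U ×ˢ W,
        {x : Evec n | ‖x - xo‖ ≤ γ ∧ ∀ x', ‖x' - xo‖ ≤ γ →
          pObj Y B φ₀ Φ p x ≤ pObj Y B φ₀ Φ p x'} = {g p}) ∧
      (∀ p ∈ U ×ˢ W, ∀ q ∈ U ×ˢ W, ‖g p - g q‖ ≤ ℓ * ‖p - q‖) ∧
      (∀ p ∈ U ×ˢ W,
        sInf (pObj Y B φ₀ Φ p '' {x | ‖x - xo‖ ≤ γ}) = ((mg p : ℝ) : EReal)) ∧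
      (∀ p ∈ U ×ˢ W, ∀ q ∈ U ×ˢ W, |mg p - mg q| ≤ ℓ * ‖p - q‖)

/-! ### Normal cones and coderivatives on products -/

/-- Regular (Fréchet) normal cone to a subset of ℝ^a × ℝ^b. -/
def regNormalCone2 {a b : ℕ} (Ω : Set (Evec a × Evec b)) (z : Evec a × Evec b) :
    Set (Evec a × Evec b) :=
  {v | ∀ ε > (0 : ℝ), ∃ δ > (0 : ℝ), ∀ w ∈ Ω, ‖w - z‖ < δ →
    ⟪v.1, w.1 - z.1⟫ + ⟪v.2, w.2 - z.2⟫ ≤ ε * ‖w - z‖}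

/-- Limiting (Mordukhovich) normal cone to a subset of ℝ^a × ℝ^b. -/
def limNormalCone2 {a b : ℕ} (Ω : Set (Evec a × Evec b)) (z : Evec a × Evec b) :
    Set (Evec a × Evec b) :=
  {v | ∃ (zs vs : ℕ → Evec a × Evec b), (∀ k, zs k ∈ Ω) ∧
    (∀ k, vs k ∈ regNormalCone2 Ω (zs k)) ∧
    Tendsto zs atTop (𝓝 z) ∧ Tendsto vs atTop (𝓝 v)}

/-- Coderivative of a set-valued mapping between Euclidean spaces. -/
def coDeriv {a b : ℕ} (F : Evec a → Set (Evec b)) (z : Evec a) (w : Evec b)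
    (v : Evec b) : Set (Evec a) :=
  {u | (u, -v) ∈ limNormalCone2 (svGraph F) (z, w)}

end

/-! For polyhedral `Y`, every `λ ∈ ∂θ(z)` lies in `Y` with `z - Bλ` normal to `Y` at `λ`, so the
linear map `(z, λ) ↦ (λ, z - Bλ)` sends `gph ∂θ` into the graph of the normal cone map `N_Y`.
Along a tangent direction `(η, ζ)` of that graph at `(λ̄, z̄ - Bλ̄)`, `η` lies in the critical
cone `K`, `ζ ∈ K*` and `⟨ζ, η⟩ = 0`. For `η ∈ D(∂θ)(z̄, λ̄)(u)` with `u = ∇Φ(x̄)ξ` this gives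
`u = ζ + Bη ∈ K* + rge B` and `θ_{K,B}(u) ≤ ½⟨η, Bη⟩ = ½⟨η, u⟩ = -½⟨∇²L ξ, ξ⟩`, so the
second-order sufficient condition forces `ξ = 0`. -/

theorem mapsTo_bTangentCone {E F : Type*} [NormedAddCommGroup E] [NormedSpace ℝ E]
    [NormedAddCommGroup F] [NormedSpace ℝ F] (f : E →L[ℝ] F) {Ω : Set E} {Ω' : Set F}
    (h : MapsTo f Ω Ω') (x : E) : MapsTo f (bTangentCone Ω x) (bTangentCone Ω' (f x)) := by
  rintro w ⟨zs, a, hzs, ha, hz, hw⟩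
  refine ⟨fun j => f (zs j), a, fun j => h (hzs j), ha, (f.continuous.tendsto x).comp hz, ?_⟩
  simpa only [Function.comp_def, map_sub, map_smul] using (f.continuous.tendsto w).comp hw

section

variable {k : ℕ} {B : Evec k →L[ℝ] Evec k}

def normalConeGraph (Y : Set (Evec k)) : Set (Evec k × Evec k) :=
  {p | p.1 ∈ Y ∧ p.2 ∈ convNormalCone Y p.1}

theorem inner_sub_nonneg_of_mem_normalConeGraph {Y : Set (Evec k)} {p q : Evec k × Evec k}
    (hp : p ∈ normalConeGraph Y) (hq : q ∈ normalConeGraph Y) :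
    0 ≤ ⟪p.2 - q.2, p.1 - q.1⟫ := by
  have hpq := hp.2 q.1 hq.1
  have hqp := hq.2 p.1 hp.1
  rw [← neg_sub, inner_neg_right] at hpq
  rw [inner_sub_left]
  linarith

theorem convNormalCone_subset_polarCone (Y : Set (Evec k)) (l : Evec k) :
    convNormalCone Y l ⊆ polarCone (bTangentCone Y l) := by
  rintro v hv w ⟨ys, a, hys, ha, -, hw⟩
  refine le_of_tendsto' (tendsto_const_nhds.inner hw) fun j => ?_
  rw [real_inner_smul_right]
  exact mul_nonpos_of_nonneg_of_nonpos (ha j) (hv _ (hys j))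

theorem IsPolyhedral.convex {Y : Set (Evec k)} (hY : IsPolyhedral Y) : Convex ℝ Y := by
  obtain ⟨p, b, c, rfl⟩ := hY
  rw [ofPred_forall]
  exact convex_iInter fun i => convex_halfSpace_le (innerₛₗ ℝ (b i)).isLinear (c i)

theorem IsPolyhedral.exists_pos_add_smul_mem {Y : Set (Evec k)} (hY : IsPolyhedral Y)
    {l w : Evec k} (hl : l ∈ Y) (hw : w ∈ bTangentCone Y l) :
    ∃ t : ℝ, 0 < t ∧ l + t • w ∈ Y := by
  obtain ⟨p, b, c, rfl⟩ := hY
  have hfacet : ∀ i, ∀ᶠ t in 𝓝[>] (0 : ℝ), ⟪b i, l + t • w⟫ ≤ c i := by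
    intro i
    rcases (hl i).lt_or_eq with hlt | heq
    · have hcont : Continuous fun t : ℝ => ⟪b i, l + t • w⟫ := by fun_prop
      refine nhdsWithin_le_nhds (((hcont.tendsto 0).eventually (gt_mem_nhds ?_)).mono
        fun _ => le_of_lt)
      simpa using hlt
    · have hbw : ⟪b i, w⟫ ≤ 0 := by
        refine convNormalCone_subset_polarCone _ l (fun y hy => ?_) w hw
        rw [inner_sub_right, heq]
        linarith [hy i]
      filter_upwards [self_mem_nhdsWithin] with t (ht : 0 < t)
      rw [inner_add_right, real_inner_smul_right, heq]
      nlinarith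
  obtain ⟨t, hmem, ht⟩ := ((eventually_all.2 hfacet).and self_mem_nhdsWithin).exists
  exact ⟨t, ht, hmem⟩

theorem mem_convNormalCone_of_isMaxOn (hBsym : ∀ u v : Evec k, ⟪B u, v⟫ = ⟪u, B v⟫)
    {Y : Set (Evec k)} (hY : Convex ℝ Y) {z l : Evec k} (hl : l ∈ Y)
    (hmax : IsMaxOn (fun y => ⟪y, z⟫ - 1 / 2 * ⟪y, B y⟫) Y l) :
    z - B l ∈ convNormalCone Y l := by
  intro y hy
  set d := y - l
  have hslope : ∀ t ∈ Ioc (0 : ℝ) 1, ⟪z - B l, d⟫ ≤ t * (1 / 2 * ⟪d, B d⟫) := by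
    rintro t ⟨ht0, ht1⟩
    have h := isMaxOn_iff.1 hmax _ (hY.add_smul_sub_mem hl hy ⟨ht0.le, ht1⟩)
    have hsym : ⟪l, B d⟫ = ⟪d, B l⟫ := by rw [← hBsym, real_inner_comm]
    simp only [map_add, map_smul, inner_add_left, inner_add_right, real_inner_smul_left,
      real_inner_smul_right] at h
    rw [real_inner_comm, inner_sub_right]
    refine le_of_mul_le_mul_left ?_ ht0
    nlinarith
  have hlim : Tendsto (fun t : ℝ => t * (1 / 2 * ⟪d, B d⟫)) (𝓝[>] 0) (𝓝 0) := by
    simpa using ((continuous_mul_const (1 / 2 * ⟪d, B d⟫)).tendsto 0).mono_left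
      nhdsWithin_le_nhds
  exact ge_of_tendsto hlim (eventually_of_mem (Ioc_mem_nhdsGT one_pos) hslope)

theorem le_thetaY {Y : Set (Evec k)} {u y : Evec k} (hy : y ∈ Y) :
    ((⟪y, u⟫ - 1 / 2 * ⟪y, B y⟫ : ℝ) : EReal) ≤ thetaY Y B u :=
  le_iSup₂_of_le y hy le_rfl

theorem thetaY_add_le {Y : Set (Evec k)} {u d : Evec k} {c : ℝ}
    (h : ∀ y ∈ Y, ⟪y, d⟫ ≤ c) : thetaY Y B (u + d) ≤ thetaY Y B u + c := by
  refine iSup₂_le fun y hy => ?_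
  rw [inner_add_right, add_sub_right_comm, EReal.coe_add]
  exact add_le_add (le_thetaY hy) (EReal.coe_le_coe_iff.2 (h y hy))

theorem thetaY_add_map_le
    (hBsym : ∀ u v : Evec k, ⟪B u, v⟫ = ⟪u, B v⟫) (hBpsd : ∀ u : Evec k, 0 ≤ ⟪u, B u⟫)
    {K : Set (Evec k)} {ζ : Evec k} (hζ : ζ ∈ polarCone K) (η : Evec k) :
    thetaY K B (ζ + B η) ≤ ((1 / 2 * ⟪η, B η⟫ : ℝ) : EReal) := by
  refine iSup₂_le fun w hw => EReal.coe_le_coe_iff.2 ?_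
  have hwζ : ⟪w, ζ⟫ ≤ 0 := real_inner_comm ζ w ▸ hζ w hw
  have hsym : ⟪η, B w⟫ = ⟪w, B η⟫ := by rw [← hBsym, real_inner_comm]
  have hpsd := hBpsd (w - η)
  simp only [map_sub, inner_sub_left, inner_sub_right] at hpsd
  rw [inner_add_right]
  linarith

theorem thetaY_map_le
    (hBsym : ∀ u v : Evec k, ⟪B u, v⟫ = ⟪u, B v⟫) (hBpsd : ∀ u : Evec k, 0 ≤ ⟪u, B u⟫)
    (Y : Set (Evec k)) (η : Evec k) :
    thetaY Y B (B η) ≤ ((1 / 2 * ⟪η, B η⟫ : ℝ) : EReal) := by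
  simpa using thetaY_add_map_le hBsym hBpsd (K := Y) (ζ := 0) (fun w _ => by simp) η

theorem exists_thetaY_eq_coe_of_mem_subdiff
    (hBsym : ∀ u v : Evec k, ⟪B u, v⟫ = ⟪u, B v⟫) (hBpsd : ∀ u : Evec k, 0 ≤ ⟪u, B u⟫)
    {Y : Set (Evec k)} (hYne : Y.Nonempty)
    {z l : Evec k} (h : l ∈ subdiff (thetaY Y B) z) : ∃ r : ℝ, thetaY Y B z = r := by
  obtain ⟨y, hy⟩ := hYne
  have hbot : thetaY Y B z ≠ ⊥ := ne_bot_of_le_ne_bot (EReal.coe_ne_bot _) (le_thetaY hy)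
  have htop : thetaY Y B z ≠ ⊤ := by
    intro htop
    have := (h (B l)).trans (thetaY_map_le hBsym hBpsd Y l)
    rw [htop, EReal.top_add_coe, top_le_iff] at this
    exact EReal.coe_ne_top _ this
  exact ⟨_, (EReal.coe_toReal htop hbot).symm⟩

theorem mem_normalConeGraph_of_mem_subdiff
    (hBsym : ∀ u v : Evec k, ⟪B u, v⟫ = ⟪u, B v⟫) (hBpsd : ∀ u : Evec k, 0 ≤ ⟪u, B u⟫)
    {Y : Set (Evec k)} (hYne : Y.Nonempty)
    (hY : IsPolyhedral Y) {z l : Evec k} (h : l ∈ subdiff (thetaY Y B) z) :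
    (l, z - B l) ∈ normalConeGraph Y := by
  obtain ⟨r, hr⟩ := exists_thetaY_eq_coe_of_mem_subdiff hBsym hBpsd hYne h
  have hle : ∀ y ∈ Y, ⟪y, z⟫ - 1 / 2 * ⟪y, B y⟫ ≤ r := fun y hy =>
    EReal.coe_le_coe_iff.1 (hr ▸ le_thetaY hy)
  have hlY : l ∈ Y := by
    obtain ⟨p, b, c, rfl⟩ := hY
    intro i
    have hi := (h (z + b i)).trans
      (thetaY_add_le (c := c i) fun y hy => (real_inner_comm _ _).trans_le (hy i))
    rw [hr, add_sub_cancel_left, real_inner_comm, ← EReal.coe_add, ← EReal.coe_add,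
      EReal.coe_le_coe_iff] at hi
    linarith
  have hmax : IsMaxOn (fun y => ⟪y, z⟫ - 1 / 2 * ⟪y, B y⟫) Y l := by
    refine isMaxOn_iff.2 fun y hy => ?_
    have hl := (h (B l)).trans (thetaY_map_le hBsym hBpsd Y l)
    rw [hr, ← EReal.coe_add, EReal.coe_le_coe_iff, inner_sub_right] at hl
    linarith [hle y hy]
  exact ⟨hlY, mem_convNormalCone_of_isMaxOn hBsym hY.convex hlY hmax⟩

theorem bTangentCone_normalConeGraph {Y : Set (Evec k)} (hY : IsPolyhedral Y)
    {l v η ζ : Evec k} (hlv : (l, v) ∈ normalConeGraph Y)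
    (h : (η, ζ) ∈ bTangentCone (normalConeGraph Y) (l, v)) :
    η ∈ bTangentCone Y l ∩ {w | ⟪v, w⟫ = 0} ∧
      ζ ∈ polarCone (bTangentCone Y l ∩ {w | ⟪v, w⟫ = 0}) ∧ ⟪ζ, η⟫ = 0 := by
  obtain ⟨ps, a, hps, ha, hp, hlim⟩ := h
  have hl : Tendsto (fun j => (ps j).1) atTop (𝓝 l) := hp.fst_nhds
  have hv : Tendsto (fun j => (ps j).2) atTop (𝓝 v) := hp.snd_nhds
  have hη : Tendsto (fun j => a j • ((ps j).1 - l)) atTop (𝓝 η) := hlim.fst_nhds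
  have hζ : Tendsto (fun j => a j • ((ps j).2 - v)) atTop (𝓝 ζ) := hlim.snd_nhds
  have hηT : η ∈ bTangentCone Y l := ⟨_, a, fun j => (hps j).1, ha, hl, hη⟩
  have hvη : ⟪v, η⟫ = 0 := by
    refine le_antisymm (convNormalCone_subset_polarCone Y l hlv.2 η hηT)
      (ge_of_tendsto' (hv.inner hη) fun j => ?_)
    have hj := (hps j).2 l hlv.1
    rw [← neg_sub, inner_neg_right] at hj
    rw [real_inner_smul_right]
    exact mul_nonneg (ha j) (by linarith)
  -- Polyhedrality gives one `t > 0` with `l + t • w ∈ Y`, so normality of `v_j` at `l_j`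
  -- bounds `t ⟪a_j (v_j - v), w⟫` by `⟪a_j (v_j - v), l_j - l⟫ → ⟪ζ, 0⟫`.
  have hζK : ζ ∈ polarCone (bTangentCone Y l ∩ {w | ⟪v, w⟫ = 0}) := by
    rintro w ⟨hwT, hvw : ⟪v, w⟫ = 0⟩
    obtain ⟨t, ht, hmem⟩ := hY.exists_pos_add_smul_mem hlv.1 hwT
    have hstep : ∀ j,
        t * ⟪a j • ((ps j).2 - v), w⟫ ≤ ⟪a j • ((ps j).2 - v), (ps j).1 - l⟫ := by
      intro j
      have h₁ := (hps j).2 _ hmem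
      have h₂ := hlv.2 _ (hps j).1
      have hj : t * ⟪(ps j).2 - v, w⟫ ≤ ⟪(ps j).2 - v, (ps j).1 - l⟫ := by
        simp only [inner_sub_left, inner_sub_right, inner_add_right, real_inner_smul_right]
          at h₁ h₂ ⊢
        rw [hvw]
        linarith
      rw [real_inner_smul_left, real_inner_smul_left]
      nlinarith [ha j]
    have hlim0 : Tendsto (fun j => ⟪a j • ((ps j).2 - v), (ps j).1 - l⟫) atTop (𝓝 0) := by
      simpa using hζ.inner (hl.sub_const l)
    have htw := le_of_tendsto_of_tendsto' ((hζ.inner tendsto_const_nhds).const_mul t) hlim0 hstep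
    exact le_of_mul_le_mul_left (by simpa using htw) ht
  refine ⟨⟨hηT, hvη⟩, hζK,
    le_antisymm (hζK η ⟨hηT, hvη⟩) (ge_of_tendsto' (hζ.inner hη) fun j => ?_)⟩
  rw [real_inner_smul_left, real_inner_smul_right]
  exact mul_nonneg (ha j) (mul_nonneg (ha j) (inner_sub_nonneg_of_mem_normalConeGraph (hps j) hlv))

theorem gDeriv_subdiff_thetaY
    (hBsym : ∀ u v : Evec k, ⟪B u, v⟫ = ⟪u, B v⟫) (hBpsd : ∀ u : Evec k, 0 ≤ ⟪u, B u⟫)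
    {Y : Set (Evec k)} (hYne : Y.Nonempty) (hY : IsPolyhedral Y) {z l u η : Evec k}
    (hl : l ∈ subdiff (thetaY Y B) z) (hη : η ∈ gDeriv (subdiff (thetaY Y B)) z l u) :
    η ∈ critCone Y B z l ∧ u - B η ∈ polarCone (critCone Y B z l) ∧ ⟪u - B η, η⟫ = 0 := by
  let L : Evec k × Evec k →L[ℝ] Evec k × Evec k :=
    (ContinuousLinearMap.snd ℝ _ _).prod
      (ContinuousLinearMap.fst ℝ _ _ - B.comp (ContinuousLinearMap.snd ℝ _ _))
  have hL : MapsTo L (svGraph (subdiff (thetaY Y B))) (normalConeGraph Y) := fun p hp =>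
    mem_normalConeGraph_of_mem_subdiff hBsym hBpsd hYne hY hp
  exact bTangentCone_normalConeGraph hY (mem_normalConeGraph_of_mem_subdiff hBsym hBpsd hYne hY hl)
    (mapsTo_bTangentCone L hL (z, l) hη)

end

theorem noncritical_of_SOSC_general {n m : ℕ} (Y : Set (Evec m)) (hYne : Y.Nonempty) (hYpoly : IsPolyhedral Y)
    (B : Evec m →L[ℝ] Evec m) (hBsym : ∀ u v : Evec m, ⟪B u, v⟫ = ⟪u, B v⟫)
    (hBpsd : ∀ u : Evec m, 0 ≤ ⟪u, B u⟫)
    (φ₀ : Evec n → ℝ)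
    (Φ : Evec n → Evec m)
    (xo : Evec n) (lmo : Evec m)
    (hkkt2 : lmo ∈ subdiff (thetaY Y B) (Φ xo))
    (hsosc : SOSC Y B φ₀ Φ xo lmo) :
    IsNoncriticalENLP Y B φ₀ Φ xo lmo := by
  intro ξ η hη hsum
  by_contra hξ
  set u := fderiv ℝ Φ xo ξ
  obtain ⟨-, hζK, hζη⟩ := gDeriv_subdiff_thetaY hBsym hBpsd hYne hYpoly hkkt2 hη
  have hu : u ∈ polarCone (critCone Y B (Φ xo) lmo) + range B :=
    ⟨u - B η, hζK, B η, ⟨η, rfl⟩, sub_add_cancel u (B η)⟩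
  have hhess : ⟪hessL B φ₀ Φ xo lmo ξ, ξ⟫ = -⟪η, B η⟫ := by
    rw [inner_sub_left, sub_eq_zero] at hζη
    rw [eq_neg_of_add_eq_zero_left hsum, inner_neg_left, ContinuousLinearMap.adjoint_inner_left,
      real_inner_comm, hζη, real_inner_comm]
  have hθ := thetaY_add_map_le hBsym hBpsd hζK η
  rw [sub_add_cancel] at hθ
  refine (hsosc ξ hξ hu).not_ge ?_
  calc ((⟪hessL B φ₀ Φ xo lmo ξ, ξ⟫ : ℝ) : EReal) + 2 * thetaY (critCone Y B (Φ xo) lmo) B u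
      ≤ ((-⟪η, B η⟫ : ℝ) : EReal) + 2 * ((1 / 2 * ⟪η, B η⟫ : ℝ) : EReal) := by
        rw [hhess]; gcongr
    _ = 0 := by
        rw [show (2 : EReal) = ((2 : ℝ) : EReal) from rfl, ← EReal.coe_mul, ← EReal.coe_add,
          EReal.coe_eq_zero]
        ring

/-- The second-order sufficient condition yields noncriticality of the multiplier. -/
theorem noncritical_of_SOSC {n m : ℕ} (Y : Set (Evec m)) (hYne : Y.Nonempty) (hYpoly : IsPolyhedral Y)
    (B : Evec m →L[ℝ] Evec m) (hBsym : ∀ u v : Evec m, ⟪B u, v⟫ = ⟪u, B v⟫)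
    (hBpsd : ∀ u : Evec m, 0 ≤ ⟪u, B u⟫)
    (φ₀ : Evec n → ℝ) (hφ₀ : ContDiff ℝ 2 φ₀)
    (Φ : Evec n → Evec m) (hΦ : ContDiff ℝ 2 Φ)
    (xo : Evec n) (lmo : Evec m)
    (hkkt1 : gradient (fun x => Lag B φ₀ Φ x lmo) xo = 0)
    (hkkt2 : lmo ∈ subdiff (thetaY Y B) (Φ xo))
    (hsosc : SOSC Y B φ₀ Φ xo lmo) :
    IsNoncriticalENLP Y B φ₀ Φ xo lmo :=
  noncritical_of_SOSC_general Y hYne hYpoly B hBsym hBpsd φ₀ Φ xo lmo hkkt2 hsosc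
end

section
/- Let x̄ be a fully stable local optimal solution of the ENLP. Then the basic constraint qualification holds at x̄: N_{dom θ}(Φ(x̄)) ∩ ker ∇Φ(x̄)* = {0}, where dom θ := {u ∈ ℝ^m : θ(u) < ∞} and N_{dom θ}(Φ(x̄)) is the normal cone of convex analysis to the convex set dom θ at Φ(x̄). -/
open Filter Topology Metric Set Pointwise
open scoped RealInnerProductSpace

set_option maxHeartbeats 1600000 in
/-- Full stability implies the basic constraint qualification. -/
theorem bcq_of_fullStability {n m : ℕ} (Y : Set (Evec m)) (hYne : Y.Nonempty) (hYpoly : IsPolyhedral Y)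
    (B : Evec m →L[ℝ] Evec m) (hBsym : ∀ u v : Evec m, ⟪B u, v⟫ = ⟪u, B v⟫)
    (hBpsd : ∀ u : Evec m, 0 ≤ ⟪u, B u⟫)
    (φ₀ : Evec n → ℝ) (hφ₀ : ContDiff ℝ 2 φ₀)
    (Φ : Evec n → Evec m) (hΦ : ContDiff ℝ 2 Φ)
    (xo : Evec n) (hfs : FullyStable Y B φ₀ Φ xo) :
    convNormalCone {u | thetaY Y B u ≠ ⊤} (Φ xo) ∩
      {v | ContinuousLinearMap.adjoint (fderiv ℝ Φ xo) v = 0} = {0} := by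
  ext v
  simp only [Set.mem_inter_iff, Set.mem_singleton_iff, Set.mem_setOf_eq]
  constructor
  · rintro ⟨hN, hker⟩
    by_contra hv
    obtain ⟨γ, hγ, U, hU, W, hW, g, mg, ℓ, hℓ, hg0, hargmin, hglip, hmg, hmglip⟩ := hfs
    set A := fderiv ℝ Φ xo with hA
    have hvpos : (0:ℝ) < ‖v‖ := norm_pos_iff.mpr hv
    have hdiff : HasFDerivAt Φ A xo :=
      ((hΦ.differentiable (by norm_num)) xo).hasFDerivAt
    set c : ℝ := 1 / (2 * (ℓ + 1)) with hc
    have hcpos : 0 < c := by positivity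
    have hlo : ∀ᶠ x in 𝓝 xo, ‖Φ x - Φ xo - A (x - xo)‖ ≤ c * ‖x - xo‖ :=
      hdiff.isLittleO.def hcpos
    obtain ⟨δ, hδpos, hδ⟩ := Metric.eventually_nhds_iff.mp hlo
    obtain ⟨εW, hεW, hball⟩ := Metric.mem_nhds_iff.mp hW
    set t : ℝ := min (εW / (2 * ‖v‖)) (δ / (2 * (ℓ + 1) * ‖v‖)) with htdef
    have htpos : 0 < t := by positivity
    have ht1 : t * ‖v‖ < εW := by
      have h1 : t * (2 * ‖v‖) ≤ εW :=
        (le_div_iff₀ (by positivity)).mp (min_le_left _ _)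
      nlinarith
    have ht2 : ℓ * (t * ‖v‖) < δ := by
      have h1 : t * (2 * (ℓ + 1) * ‖v‖) ≤ δ :=
        (le_div_iff₀ (by positivity)).mp (min_le_right _ _)
      nlinarith [mul_pos htpos hvpos]
    set p : Evec n × Evec m := (0, t • v) with hp
    have hpmem : p ∈ U ×ˢ W := by
      refine Set.mk_mem_prod (mem_of_mem_nhds hU) (hball ?_)
      simp only [Metric.mem_ball, dist_zero_right, norm_smul, Real.norm_eq_abs,
        abs_of_pos htpos]
      exact ht1
    have h0mem : ((0 : Evec n), (0 : Evec m)) ∈ U ×ˢ W :=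
      Set.mk_mem_prod (mem_of_mem_nhds hU) (mem_of_mem_nhds hW)
    have hx : g p ∈ {x : Evec n | ‖x - xo‖ ≤ γ ∧ ∀ x', ‖x' - xo‖ ≤ γ →
        pObj Y B φ₀ Φ p x ≤ pObj Y B φ₀ Φ p x'} := by
      rw [hargmin p hpmem]; rfl
    have hgd : ‖g p - xo‖ ≤ ℓ * (t * ‖v‖) := by
      have := hglip p hpmem (0, 0) h0mem
      rw [hg0] at this
      refine this.trans (le_of_eq ?_)
      congr 1
      simp only [hp, Prod.norm_def, Prod.fst, Prod.snd]
      simp [norm_smul, abs_of_pos htpos, le_of_lt (mul_pos htpos hvpos)]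
    have hdom : thetaY Y B (Φ (g p) + t • v) ≠ ⊤ := by
      intro htop
      have hle : pObj Y B φ₀ Φ p (g p) ≤ ((mg p : ℝ) : EReal) := by
        rw [← hmg p hpmem]
        refine le_sInf ?_
        rintro y ⟨x', hx', rfl⟩
        exact hx.2 x' hx'
      rw [pObj] at hle
      simp only [hp] at hle htop
      rw [htop, EReal.coe_add_top] at hle
      exact (EReal.coe_ne_top _) (top_le_iff.mp hle)
    have hNu : ⟪v, (Φ (g p) + t • v) - Φ xo⟫ ≤ 0 := hN _ hdom
    set r : Evec m := Φ (g p) - Φ xo - A (g p - xo) with hr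
    have hrle : ‖r‖ ≤ c * ‖g p - xo‖ := by
      apply hδ
      rw [dist_eq_norm]
      exact lt_of_le_of_lt hgd ht2
    have e1 : ⟪v, (Φ (g p) + t • v) - Φ xo⟫
        = ⟪v, r⟫ + ⟪v, A (g p - xo)⟫ + t * ⟪v, v⟫ := by
      rw [← real_inner_smul_right, ← inner_add_right, ← inner_add_right]
      congr 1
      rw [hr]; abel
    have e2 : ⟪v, A (g p - xo)⟫ = 0 := by
      rw [← ContinuousLinearMap.adjoint_inner_left, hker, inner_zero_left]
    rw [e1, e2, real_inner_self_eq_norm_sq] at hNu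
    have hir : ⟪v, r⟫ ≥ -(‖v‖ * ‖r‖) := by
      have := abs_real_inner_le_norm v r
      cases abs_le.mp this with
      | intro h1 h2 => linarith
    have hrb : ‖r‖ ≤ c * (ℓ * (t * ‖v‖)) := by
      calc ‖r‖ ≤ c * ‖g p - xo‖ := hrle
      _ ≤ c * (ℓ * (t * ‖v‖)) := mul_le_mul_of_nonneg_left hgd hcpos.le
    have hcl : c * (2 * (ℓ + 1)) = 1 := by
      rw [hc]; field_simp
    have hfin : t * ‖v‖ ^ 2 ≤ ‖v‖ * (c * (ℓ * (t * ‖v‖))) := by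
      have h2 : t * ‖v‖ ^ 2 ≤ ‖v‖ * ‖r‖ := by linarith
      exact h2.trans (mul_le_mul_of_nonneg_left hrb (norm_nonneg v))
    clear_value t c
    clear hrle hrb hir hNu ht1 ht2
    nlinarith [mul_pos htpos (mul_pos hvpos hvpos),
      mul_le_mul_of_nonneg_right hfin (by positivity : (0:ℝ) ≤ 2 * (ℓ + 1))]
  · rintro rfl
    constructor
    · intro w _
      simp [convNormalCone]
    · simp
end

section
/- Let x̄ be a feasible solution of the ENLP and λ̄ ∈ Λ_com(x̄). If the solution map S_KKT is isolatedly calm at ((0,0),(x̄,λ̄)), then Λ_com(x̄) = {λ̄}, i.e., λ̄ is the unique Lagrange multiplier corresponding to x̄. -/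
open Filter Topology Metric Set Pointwise
open scoped RealInnerProductSpace

/-! The multiplier set Λ_com(x̄) is convex: the x-gradient of the Lagrangian at x̄ is
∇φ₀(x̄) + ∇Φ(x̄)*λ, affine in λ, and a subdifferential is an intersection of half-spaces.
Every λ ∈ Λ_com(x̄) gives a solution (x̄, λ) of the unperturbed KKT system, so isolated
calmness at the origin makes λ̄ an isolated point of Λ_com(x̄); a convex set with an
isolated point is that point alone. -/

open AffineMap in
theorem Convex.eq_singleton_of_inter_nhds_subset {E : Type*} [AddCommGroup E] [Module ℝ E]
    [TopologicalSpace E] [IsTopologicalAddGroup E] [ContinuousSMul ℝ E] {s V : Set E} {x : E}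
    (hs : Convex ℝ s) (hx : x ∈ s) (hV : V ∈ 𝓝 x) (hsV : s ∩ V ⊆ {x}) : s = {x} := by
  refine Set.eq_singleton_iff_unique_mem.2 ⟨hx, fun y hy => ?_⟩
  have hlim : Tendsto (lineMap x y) (𝓝[>] (0 : ℝ)) (𝓝 x) := by
    simpa using (lineMap_continuous.tendsto (0 : ℝ)).mono_left nhdsWithin_le_nhds
  obtain ⟨t, htV, ht⟩ := ((hlim.eventually hV).and (Ioo_mem_nhdsGT one_pos)).exists
  have hxt : lineMap x y t = x := hsV ⟨hs.lineMap_mem hx hy (Ioo_subset_Icc_self ht), htV⟩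
  rcases lineMap_eq_left_iff.1 hxt with hxy | ht0
  · exact hxy.symm
  · exact absurd ht0 ht.1.ne'

theorem IsolCalm.inter_subset_singleton {A B : Type*} [NormedAddCommGroup A]
    [NormedAddCommGroup B] {F : A → Set B} {zo : A} {wo : B} (h : IsolCalm F zo wo) :
    ∃ V ∈ 𝓝 wo, F zo ∩ V ⊆ {wo} := by
  obtain ⟨ℓ, -, U, hU, V, hV, hcalm⟩ := h
  refine ⟨V, hV, fun w hw => ?_⟩
  have hw' := hcalm zo (mem_of_mem_nhds hU) w hw
  rw [sub_self, norm_zero, mul_zero, norm_le_zero_iff, sub_eq_zero] at hw'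
  exact hw'

theorem convex_subdiff {k : ℕ} (θ : Evec k → EReal) (z : Evec k) : Convex ℝ (subdiff θ z) := by
  have hsub : subdiff θ z = ⋂ u, (fun v => ⟪v, u - z⟫) ⁻¹' {r : ℝ | θ z + r ≤ θ u} := by
    ext v; simp [subdiff]
  rw [hsub]
  refine convex_iInter fun u => Convex.is_linear_preimage ?_ ⟨fun v w => inner_add_left v w _,
    fun c v => real_inner_smul_left v _ c⟩
  refine IsLowerSet.ordConnected (fun a b hba ha => ?_) |>.convex
  exact (add_le_add_right (EReal.coe_le_coe_iff.2 hba) _).trans ha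

theorem convex_lagMult {n m : ℕ} (Y : Set (Evec m)) (B : Evec m →L[ℝ] Evec m)
    (f : Evec n → Evec n) (Φ : Evec n → Evec m) (xo : Evec n) :
    Convex ℝ (LagMult Y B f Φ xo) := by
  have hPsi : {lam | Psi f Φ xo lam = 0} =
      (ContinuousLinearMap.adjoint (fderiv ℝ Φ xo)) ⁻¹' {-f xo} := by
    ext lam; simp [Psi, add_eq_zero_iff_eq_neg']
  exact (hPsi ▸ (convex_singleton _).linear_preimage _).inter (convex_subdiff _ _)

theorem hasGradientAt_lag {n m : ℕ} (B : Evec m →L[ℝ] Evec m) {φ₀ : Evec n → ℝ}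
    {Φ : Evec n → Evec m} {xo : Evec n} (lam : Evec m) (hφ₀ : DifferentiableAt ℝ φ₀ xo)
    (hΦ : DifferentiableAt ℝ Φ xo) :
    HasGradientAt (fun x => Lag B φ₀ Φ x lam) (Psi (gradient φ₀) Φ xo lam) xo := by
  rw [hasGradientAt_iff_hasFDerivAt]
  refine ((hφ₀.hasFDerivAt.add (hΦ.hasFDerivAt.inner ℝ (hasFDerivAt_const lam xo))).sub_const
    _).congr_fderiv ?_
  ext h
  simp [Psi, gradient, ContinuousLinearMap.adjoint_inner_left, real_inner_comm]

theorem lagMultCom_eq_lagMult {n m : ℕ} (Y : Set (Evec m)) (B : Evec m →L[ℝ] Evec m)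
    {φ₀ : Evec n → ℝ} {Φ : Evec n → Evec m} {xo : Evec n} (hφ₀ : DifferentiableAt ℝ φ₀ xo)
    (hΦ : DifferentiableAt ℝ Φ xo) :
    LagMultCom Y B φ₀ Φ xo = LagMult Y B (gradient φ₀) Φ xo := by
  ext lam
  simp only [LagMultCom, LagMult, (hasGradientAt_lag B lam hφ₀ hΦ).gradient, mem_ofPred_eq]

theorem mem_SKKT_zero_iff {n m : ℕ} (Y : Set (Evec m)) (B : Evec m →L[ℝ] Evec m)
    (φ₀ : Evec n → ℝ) (Φ : Evec n → Evec m) (x : Evec n) (lam : Evec m) :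
    (x, lam) ∈ SKKT Y B φ₀ Φ (0, 0) ↔ lam ∈ LagMultCom Y B φ₀ Φ x := by
  simp only [SKKT, LagMultCom, add_zero, mem_ofPred_eq]

theorem unique_multiplier_of_isolatedCalm_general {n m : ℕ} (Y : Set (Evec m))
    (B : Evec m →L[ℝ] Evec m)
    (φ₀ : Evec n → ℝ) (hφ₀ : ContDiff ℝ 2 φ₀)
    (Φ : Evec n → Evec m) (hΦ : ContDiff ℝ 2 Φ)
    (xo : Evec n) (lmo : Evec m)
    (hkkt : lmo ∈ LagMultCom Y B φ₀ Φ xo)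
    (hic : IsolCalm (SKKT Y B φ₀ Φ) ((0, 0) : Evec n × Evec m) (xo, lmo)) :
    LagMultCom Y B φ₀ Φ xo = {lmo} := by
  obtain ⟨V, hV, hSV⟩ := hic.inter_subset_singleton
  have hconv : Convex ℝ (LagMultCom Y B φ₀ Φ xo) := by
    rw [lagMultCom_eq_lagMult Y B (hφ₀.differentiable two_ne_zero xo)
      (hΦ.differentiable two_ne_zero xo)]
    exact convex_lagMult Y B _ Φ xo
  refine hconv.eq_singleton_of_inter_nhds_subset hkkt
    ((continuous_const.prodMk continuous_id).continuousAt.preimage_mem_nhds hV) ?_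
  rintro lam ⟨hlam, hlamV⟩
  exact (Prod.ext_iff.1 (hSV ⟨(mem_SKKT_zero_iff Y B φ₀ Φ xo lam).2 hlam, hlamV⟩)).2

/-- Isolated calmness of the KKT solution map yields uniqueness of the multiplier. -/
theorem unique_multiplier_of_isolatedCalm {n m : ℕ} (Y : Set (Evec m)) (hYne : Y.Nonempty) (hYpoly : IsPolyhedral Y)
    (B : Evec m →L[ℝ] Evec m) (hBsym : ∀ u v : Evec m, ⟪B u, v⟫ = ⟪u, B v⟫)
    (hBpsd : ∀ u : Evec m, 0 ≤ ⟪u, B u⟫)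
    (φ₀ : Evec n → ℝ) (hφ₀ : ContDiff ℝ 2 φ₀)
    (Φ : Evec n → Evec m) (hΦ : ContDiff ℝ 2 Φ)
    (xo : Evec n) (lmo : Evec m)
    (hfeas : thetaY Y B (Φ xo) ≠ ⊤)
    (hkkt : lmo ∈ LagMultCom Y B φ₀ Φ xo)
    (hic : IsolCalm (SKKT Y B φ₀ Φ) ((0, 0) : Evec n × Evec m) (xo, lmo)) :
    LagMultCom Y B φ₀ Φ xo = {lmo} :=
  unique_multiplier_of_isolatedCalm_general Y B φ₀ hφ₀ Φ hΦ xo lmo hkkt hic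
end

section
/- Let x̄ be a feasible solution of the ENLP with Λ_com(x̄) = {λ̄} for some λ̄. Then the basic constraint qualification holds at x̄: N_{dom θ}(Φ(x̄)) ∩ ker ∇Φ(x̄)* = {0}, where dom θ := {u ∈ ℝ^m : θ(u) < ∞} and N_{dom θ}(Φ(x̄)) is the normal cone of convex analysis to the convex set dom θ at Φ(x̄). -/
open Filter Topology Metric Set Pointwise
open scoped RealInnerProductSpace

/-! A vector `v` normal to `dom θ` at `Φ x̄` with `∇Φ(x̄)* v = 0` can be added to any multiplier:
it leaves `∇ₓL` unchanged, since `x ↦ ⟪v, Φ x⟫` is stationary at `x̄`, and only decreases the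
right-hand side of the subgradient inequality on `dom θ`. Uniqueness of the multiplier
then forces `v = 0`. -/

section

variable {𝕜 E F : Type*} [NontriviallyNormedField 𝕜] [NormedAddCommGroup E] [NormedSpace 𝕜 E]
  [NormedAddCommGroup F] [NormedSpace 𝕜 F]

theorem fderiv_add_of_hasFDerivAt_zero {f g : E → F} {x : E} (hg : HasFDerivAt g (0 : E →L[𝕜] F) x) :
    fderiv 𝕜 (fun y => f y + g y) x = fderiv 𝕜 f x := by
  by_cases hf : DifferentiableAt 𝕜 f x
  · rw [fderiv_fun_add hf hg.differentiableAt, hg.fderiv, add_zero]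
  · rw [fderiv_zero_of_not_differentiableAt hf, fderiv_zero_of_not_differentiableAt]
    rwa [hg.differentiableAt.fun_add_iff_left]

end

theorem hasFDerivAt_inner_comp_of_adjoint_eq_zero {E F : Type*}
    [NormedAddCommGroup E] [InnerProductSpace ℝ E] [CompleteSpace E]
    [NormedAddCommGroup F] [InnerProductSpace ℝ F] [CompleteSpace F]
    {Φ : E → F} {Φ' : E →L[ℝ] F} {x : E} {v : F} (hΦ : HasFDerivAt Φ Φ' x)
    (hv : ContinuousLinearMap.adjoint Φ' v = 0) :
    HasFDerivAt (fun y => ⟪v, Φ y⟫) (0 : E →L[ℝ] ℝ) x := by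
  have hzero : (innerSL ℝ v).comp Φ' = 0 := by
    ext h
    simp [← ContinuousLinearMap.adjoint_inner_left, hv]
  have h := (innerSL ℝ v).hasFDerivAt.comp x hΦ
  rwa [hzero] at h

theorem add_mem_subdiff_of_mem_convNormalCone {k : ℕ} {θ : Evec k → EReal} {z lam v : Evec k}
    (hlam : lam ∈ subdiff θ z) (hv : v ∈ convNormalCone {u | θ u ≠ ⊤} z) :
    lam + v ∈ subdiff θ z := by
  intro u
  by_cases hu : θ u = ⊤
  · simp [hu]
  have hle : ⟪lam + v, u - z⟫ ≤ ⟪lam, u - z⟫ := by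
    rw [inner_add_left]
    linarith [hv u hu]
  calc θ z + ((⟪lam + v, u - z⟫ : ℝ) : EReal) ≤ θ z + ((⟪lam, u - z⟫ : ℝ) : EReal) := by
        gcongr
    _ ≤ θ u := hlam u

theorem Lag_add {n m : ℕ} (B : Evec m →L[ℝ] Evec m) (φ₀ : Evec n → ℝ) (Φ : Evec n → Evec m)
    (x : Evec n) (lam v : Evec m) :
    Lag B φ₀ Φ x (lam + v) = Lag B φ₀ Φ x lam +
      (⟪v, Φ x⟫ + ((1 / 2) * ⟪lam, B lam⟫ - (1 / 2) * ⟪lam + v, B (lam + v)⟫)) := by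
  simp only [Lag, inner_add_right, real_inner_comm (Φ x) v]
  ring

theorem gradient_Lag_add_of_adjoint_eq_zero {n m : ℕ} (B : Evec m →L[ℝ] Evec m)
    (φ₀ : Evec n → ℝ) {Φ : Evec n → Evec m} {x : Evec n} (hΦ : DifferentiableAt ℝ Φ x)
    (lam : Evec m) {v : Evec m} (hv : ContinuousLinearMap.adjoint (fderiv ℝ Φ x) v = 0) :
    gradient (fun y => Lag B φ₀ Φ y (lam + v)) x = gradient (fun y => Lag B φ₀ Φ y lam) x := by
  simp only [gradient, Lag_add]
  rw [fderiv_add_of_hasFDerivAt_zero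
    ((hasFDerivAt_inner_comp_of_adjoint_eq_zero hΦ.hasFDerivAt hv).add_const _)]

theorem add_mem_LagMultCom {n m : ℕ} {Y : Set (Evec m)} {B : Evec m →L[ℝ] Evec m}
    {φ₀ : Evec n → ℝ} {Φ : Evec n → Evec m} {xo : Evec n} (hΦ : DifferentiableAt ℝ Φ xo)
    {lam v : Evec m} (hlam : lam ∈ LagMultCom Y B φ₀ Φ xo)
    (hvN : v ∈ convNormalCone {u | thetaY Y B u ≠ ⊤} (Φ xo))
    (hvK : ContinuousLinearMap.adjoint (fderiv ℝ Φ xo) v = 0) :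
    lam + v ∈ LagMultCom Y B φ₀ Φ xo :=
  ⟨(gradient_Lag_add_of_adjoint_eq_zero B φ₀ hΦ lam hvK).trans hlam.1,
    add_mem_subdiff_of_mem_convNormalCone hlam.2 hvN⟩

theorem bcq_of_unique_multiplier_general {n m : ℕ} (Y : Set (Evec m))
    (B : Evec m →L[ℝ] Evec m)
    (φ₀ : Evec n → ℝ)
    (Φ : Evec n → Evec m) (hΦ : ContDiff ℝ 2 Φ)
    (xo : Evec n) (lmo : Evec m)
    (hunique : LagMultCom Y B φ₀ Φ xo = {lmo}) :
    convNormalCone {u | thetaY Y B u ≠ ⊤} (Φ xo) ∩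
      {v | ContinuousLinearMap.adjoint (fderiv ℝ Φ xo) v = 0} = {0} := by
  have hΦd : DifferentiableAt ℝ Φ xo := (hΦ.differentiable two_ne_zero).differentiableAt
  have hlmo : lmo ∈ LagMultCom Y B φ₀ Φ xo := hunique ▸ rfl
  refine Set.eq_singleton_iff_unique_mem.mpr ⟨⟨fun _ _ => by simp, map_zero _⟩, ?_⟩
  rintro v ⟨hvN, hvK⟩
  have hmem := add_mem_LagMultCom hΦd hlmo hvN hvK
  rw [hunique, Set.mem_singleton_iff] at hmem
  exact add_eq_left.mp hmem

/-- Uniqueness of the Lagrange multiplier implies the basic constraint qualification. -/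
theorem bcq_of_unique_multiplier {n m : ℕ} (Y : Set (Evec m)) (hYne : Y.Nonempty) (hYpoly : IsPolyhedral Y)
    (B : Evec m →L[ℝ] Evec m) (hBsym : ∀ u v : Evec m, ⟪B u, v⟫ = ⟪u, B v⟫)
    (hBpsd : ∀ u : Evec m, 0 ≤ ⟪u, B u⟫)
    (φ₀ : Evec n → ℝ) (hφ₀ : ContDiff ℝ 2 φ₀)
    (Φ : Evec n → Evec m) (hΦ : ContDiff ℝ 2 Φ)
    (xo : Evec n) (lmo : Evec m)
    (hfeas : thetaY Y B (Φ xo) ≠ ⊤)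
    (hunique : LagMultCom Y B φ₀ Φ xo = {lmo}) :
    convNormalCone {u | thetaY Y B u ≠ ⊤} (Φ xo) ∩
      {v | ContinuousLinearMap.adjoint (fderiv ℝ Φ xo) v = 0} = {0} :=
  bcq_of_unique_multiplier_general Y B φ₀ Φ hΦ xo lmo hunique
end

section
/- Let (x̄,λ̄) ∈ S_KKT(0,0), i.e., (x̄,λ̄) is a solution of the KKT system for the ENLP. Then S_KKT is isolatedly calm at ((0,0),(x̄,λ̄)) if and only if the following implication holds: whenever ξ ∈ ℝ^n and η ∈ ℝ^m satisfy ∇²_{xx}L(x̄,λ̄)ξ + ∇Φ(x̄)*η = 0 and η ∈ D(∂θ)(Φ(x̄),λ̄)(∇Φ(x̄)ξ), one has (ξ,η) = (0,0). -/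
open Filter Topology Metric Set Pointwise
open scoped RealInnerProductSpace

/-!
The graph of `S_KKT` is the image of the graph of `∂θ` under the substitution
`(x, λ, z) ↦ ((∇ₓL(x, λ), z - Φ x), (x, λ))`, which is differentiable in `(x, λ)` and a
translation in `z`. Tangent vectors therefore transfer: `(ξ, η) ∈ DS_KKT((0,0),(x̄,λ̄))(0)`
exactly when `∇²ₓₓL(x̄,λ̄) ξ + ∇Φ(x̄)* η = 0` and `η ∈ D(∂θ)(Φ x̄, λ̄)(∇Φ(x̄) ξ)`. On the other
hand, a set-valued map into a finite-dimensional space is isolatedly calm at a graph point iff its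
graphical derivative there maps `0` only to `0`: a sequence violating calmness, normalised by
`‖w_k - w̄‖`, has a convergent subsequence on the unit sphere, whose limit is a nonzero element of
`DS(z̄, w̄)(0)`.
-/

section TangentCone

variable {E : Type*} [NormedAddCommGroup E] [NormedSpace ℝ E]

theorem HasFDerivAt.tendsto_smul_sub {F : Type*} [NormedAddCommGroup F] [NormedSpace ℝ F]
    {f : E → F} {f' : E →L[ℝ] F} {x : E} (hf : HasFDerivAt f f' x) {xs : ℕ → E} {c : ℕ → ℝ}
    {v : E} (hxs : Tendsto xs atTop (𝓝 x)) (hv : Tendsto (fun k => c k • (xs k - x)) atTop (𝓝 v)) :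
    Tendsto (fun k => c k • (f (xs k) - f x)) atTop (𝓝 (f' v)) := by
  simpa using (hasFDerivWithinAt_univ.2 hf).lim (tendsto_sub_nhds_zero_iff.2 hxs)
    (.of_forall fun _ => mem_univ _) hv

theorem eq_zero_of_tendsto_smul_of_not_tendsto_atTop {a : ℕ → ℝ} {d : ℕ → E} {w : E}
    (ha : ∀ k, 0 ≤ a k) (hA : ¬Tendsto a atTop atTop) (hd : Tendsto d atTop (𝓝 0))
    (hw : Tendsto (fun k => a k • d k) atTop (𝓝 w)) : w = 0 := by
  obtain ⟨C, hC⟩ : ∃ C, ∃ᶠ k in atTop, a k < C := by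
    simpa only [Filter.tendsto_atTop, not_forall, Filter.not_eventually, not_le] using hA
  have hbound : ∃ᶠ k in atTop, ‖a k • d k‖ ≤ C * ‖d k‖ := hC.mono fun k hk => by
    rw [norm_smul, Real.norm_of_nonneg (ha k)]
    exact mul_le_mul_of_nonneg_right hk.le (norm_nonneg _)
  have hle := le_of_tendsto_of_tendsto_of_frequently hw.norm
    (by simpa using hd.norm.const_mul C) hbound
  exact norm_le_zero_iff.1 hle

theorem exists_tendsto_atTop_of_mem_bTangentCone {Ω : Set E} {z w : E} (hz : z ∈ Ω)
    (hw : w ∈ bTangentCone Ω z) :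
    ∃ (zs : ℕ → E) (c : ℕ → ℝ), (∀ k, zs k ∈ Ω) ∧ (∀ k, 0 < c k) ∧ Tendsto c atTop atTop ∧
      Tendsto zs atTop (𝓝 z) ∧ Tendsto (fun k => c k • (zs k - z)) atTop (𝓝 w) := by
  obtain ⟨zs, a, hzs, ha, hlim, hdir⟩ := hw
  by_cases hA : Tendsto a atTop atTop
  · refine ⟨zs, fun k => max (a k) 1, hzs, fun k => by positivity,
      tendsto_atTop_mono (fun k => le_max_left _ _) hA, hlim, hdir.congr' ?_⟩
    filter_upwards [hA.eventually_ge_atTop 1] with k hk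
    rw [max_eq_left hk]
  · have hw0 : w = 0 := eq_zero_of_tendsto_smul_of_not_tendsto_atTop ha hA
      (tendsto_sub_nhds_zero_iff.2 hlim) hdir
    refine ⟨fun _ => z, fun k => k + 1, fun _ => hz, fun k => by positivity,
      tendsto_atTop_add_const_right _ 1 tendsto_natCast_atTop_atTop, tendsto_const_nhds, ?_⟩
    simp [hw0]

end TangentCone

section IsolCalm

variable {E F : Type*} [NormedAddCommGroup E] [NormedSpace ℝ E] [NormedAddCommGroup F]
  {S : E → Set F} {z : E} {w : F}

theorem IsolCalm.eq_zero_of_mem_gDeriv [NormedSpace ℝ F] (h : IsolCalm S z w) {v : F}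
    (hv : v ∈ gDeriv S z w 0) : v = 0 := by
  obtain ⟨ℓ, -, U, hU, V, hV, hcalm⟩ := h
  obtain ⟨ps, a, hps, ha, hlim, hdir⟩ := hv
  have hbound : ∀ᶠ k in atTop, ‖a k • ((ps k).2 - w)‖ ≤ ℓ * ‖a k • ((ps k).1 - z)‖ := by
    filter_upwards [hlim.fst_nhds.eventually_mem hU,
      hlim.snd_nhds.eventually_mem hV] with k hkU hkV
    rw [norm_smul, norm_smul, mul_left_comm]
    exact mul_le_mul_of_nonneg_left (hcalm _ hkU _ ⟨hps k, hkV⟩) (norm_nonneg _)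
  have hle := le_of_tendsto_of_tendsto hdir.snd_nhds.norm
    (by simpa using hdir.fst_nhds.norm.const_mul ℓ) hbound
  exact norm_le_zero_iff.1 hle

theorem exists_seq_of_not_isolCalm (h : ¬IsolCalm S z w) :
    ∃ (zs : ℕ → E) (ws : ℕ → F), (∀ k, ws k ∈ S (zs k)) ∧ (∀ k, ws k ≠ w) ∧
      Tendsto zs atTop (𝓝 z) ∧ Tendsto ws atTop (𝓝 w) ∧
      Tendsto (fun k => ‖ws k - w‖⁻¹ • (zs k - z)) atTop (𝓝 0) := by
  simp only [IsolCalm, not_exists, not_and, not_forall, not_le, exists_prop] at h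
  have hr : ∀ k : ℕ, (0 : ℝ) < 1 / ((k : ℝ) + 1) := fun k => by positivity
  choose zs hzs ws hws hgt using fun k : ℕ =>
    h ((k : ℝ) + 1) (by positivity) _ (ball_mem_nhds z (hr k)) _ (ball_mem_nhds w (hr k))
  have hne : ∀ k, ws k ≠ w := fun k hk => by
    have := hgt k
    simp only [hk, sub_self, norm_zero] at this
    exact (this.trans_le' (by positivity)).false
  refine ⟨zs, ws, fun k => (hws k).1, hne, ?_, ?_, ?_⟩
  · exact tendsto_iff_dist_tendsto_zero.2 <| squeeze_zero (fun _ => dist_nonneg)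
      (fun k => (mem_ball.1 (hzs k)).le) tendsto_one_div_add_atTop_nhds_zero_nat
  · exact tendsto_iff_dist_tendsto_zero.2 <| squeeze_zero (fun _ => dist_nonneg)
      (fun k => (mem_ball.1 (hws k).2).le) tendsto_one_div_add_atTop_nhds_zero_nat
  · refine squeeze_zero_norm (fun k => ?_) tendsto_one_div_add_atTop_nhds_zero_nat
    have hpos : 0 < ‖ws k - w‖ := norm_pos_iff.2 (sub_ne_zero.2 (hne k))
    rw [norm_smul, norm_inv, norm_norm, inv_mul_le_iff₀ hpos, mul_one_div,
      le_div_iff₀ (by positivity)]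
    linarith [hgt k]

theorem isolCalm_of_gDeriv_zero [NormedSpace ℝ F] [ProperSpace F]
    (h : ∀ v ∈ gDeriv S z w 0, v = 0) : IsolCalm S z w := by
  by_contra hnot
  obtain ⟨zs, ws, hmem, hne, hzs, hws, hquot⟩ := exists_seq_of_not_isolCalm hnot
  have hsphere : ∀ k, ‖ws k - w‖⁻¹ • (ws k - w) ∈ sphere (0 : F) 1 := fun k => by
    rw [mem_sphere_zero_iff_norm, norm_smul, norm_inv, norm_norm,
      inv_mul_cancel₀ (norm_ne_zero_iff.2 (sub_ne_zero.2 (hne k)))]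
  obtain ⟨v, hv, φ, hφ, hlim⟩ := (isCompact_sphere (0 : F) 1).tendsto_subseq hsphere
  have hv0 : v = 0 := h v ⟨fun k => (zs (φ k), ws (φ k)), fun k => ‖ws (φ k) - w‖⁻¹,
    fun k => hmem (φ k), fun k => by positivity,
    ((hzs.comp hφ.tendsto_atTop).prodMk_nhds (hws.comp hφ.tendsto_atTop)),
    (hquot.comp hφ.tendsto_atTop).prodMk_nhds hlim⟩
  simp [hv0] at hv

theorem isolCalm_iff_gDeriv_zero [NormedSpace ℝ F] [ProperSpace F] :
    IsolCalm S z w ↔ ∀ v ∈ gDeriv S z w 0, v = 0 :=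
  ⟨fun h _ => h.eq_zero_of_mem_gDeriv, isolCalm_of_gDeriv_zero⟩

end IsolCalm

section PerturbedSolMap

variable {X M Z : Type*} [NormedAddCommGroup X] [NormedSpace ℝ X] [NormedAddCommGroup M]
  [NormedSpace ℝ M] [NormedAddCommGroup Z] [NormedSpace ℝ Z]
  {G : X × M → X} {Φ : X → Z} {T : Z → Set M} {x₀ : X} {μ₀ : M}
  {DG : X × M →L[ℝ] X} {DΦ : X →L[ℝ] Z} {ξ : X} {η : M}

def perturbedSolMap (G : X × M → X) (Φ : X → Z) (T : Z → Set M) : X × Z → Set (X × M) :=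
  fun p => {q | G q = p.1 ∧ q.2 ∈ T (Φ q.1 + p.2)}

theorem mem_gDeriv_of_mem_gDeriv_perturbedSolMap (hsol : (x₀, μ₀) ∈ perturbedSolMap G Φ T 0)
    (hG : HasFDerivAt G DG (x₀, μ₀)) (hΦ : HasFDerivAt Φ DΦ x₀)
    (h : (ξ, η) ∈ gDeriv (perturbedSolMap G Φ T) 0 (x₀, μ₀) 0) :
    DG (ξ, η) = 0 ∧ η ∈ gDeriv T (Φ x₀) μ₀ (DΦ ξ) := by
  obtain ⟨ps, a, hps, ha, hlim, hdir⟩ := h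
  have hq : Tendsto (fun k => (ps k).2) atTop (𝓝 (x₀, μ₀)) := hlim.snd_nhds
  have hp : Tendsto (fun k => (ps k).1) atTop (𝓝 0) := hlim.fst_nhds
  have hqdir : Tendsto (fun k => a k • ((ps k).2 - (x₀, μ₀))) atTop (𝓝 (ξ, η)) :=
    hdir.snd_nhds
  have hpdir : Tendsto (fun k => a k • (ps k).1) atTop (𝓝 0) := by
    simpa using hdir.fst_nhds
  have hGdir := hG.tendsto_smul_sub hq hqdir
  simp only [(hps _).1, hsol.1, Prod.fst_zero, sub_zero] at hGdir
  refine ⟨tendsto_nhds_unique hGdir (by simpa using hpdir.fst_nhds),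
    fun k => (Φ (ps k).2.1 + (ps k).1.2, (ps k).2.2), a, fun k => (hps k).2, ha, ?_, ?_⟩
  · simpa using ((hΦ.continuousAt.tendsto.comp hq.fst_nhds).add hp.snd_nhds).prodMk_nhds
      hq.snd_nhds
  · have hΦdir := hΦ.tendsto_smul_sub hq.fst_nhds hqdir.fst_nhds
    refine Tendsto.prodMk_nhds ?_ hqdir.snd_nhds
    simpa [smul_sub, smul_add, add_sub_right_comm] using hΦdir.add hpdir.snd_nhds

theorem mem_gDeriv_perturbedSolMap_of_mem_gDeriv (hsol : (x₀, μ₀) ∈ perturbedSolMap G Φ T 0)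
    (hG : HasFDerivAt G DG (x₀, μ₀)) (hΦ : HasFDerivAt Φ DΦ x₀) (hDG : DG (ξ, η) = 0)
    (hT : η ∈ gDeriv T (Φ x₀) μ₀ (DΦ ξ)) :
    (ξ, η) ∈ gDeriv (perturbedSolMap G Φ T) 0 (x₀, μ₀) 0 := by
  have hgraph : (Φ x₀, μ₀) ∈ svGraph T := by simpa [svGraph] using hsol.2
  obtain ⟨ws, c, hws, hc, hctop, hwlim, hwdir⟩ :=
    exists_tendsto_atTop_of_mem_bTangentCone hgraph hT
  set xs : ℕ → X := fun k => x₀ + (c k)⁻¹ • ξ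
  set qs : ℕ → X × M := fun k => (xs k, (ws k).2)
  have hxdir : Tendsto (fun k => c k • (xs k - x₀)) atTop (𝓝 ξ) := by
    simp [xs, smul_inv_smul₀ (hc _).ne']
  have hx : Tendsto xs atTop (𝓝 x₀) := by
    simpa using tendsto_const_nhds.add ((tendsto_inv_atTop_zero.comp hctop).smul_const ξ)
  have hq : Tendsto qs atTop (𝓝 (x₀, μ₀)) := hx.prodMk_nhds hwlim.snd_nhds
  have hGdir := hG.tendsto_smul_sub hq (hxdir.prodMk_nhds hwdir.snd_nhds)
  have hΦdir := hΦ.tendsto_smul_sub hx hxdir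
  simp only [hsol.1, hDG, Prod.fst_zero, sub_zero] at hGdir
  refine ⟨fun k => ((G (qs k), (ws k).1 - Φ (xs k)), qs k), c, fun k => ⟨rfl, ?_⟩,
    fun k => (hc k).le, ?_, ?_⟩
  · simpa [svGraph, qs] using hws k
  · refine Tendsto.prodMk_nhds ?_ hq
    rw [← Prod.mk_zero_zero]
    simpa [hsol.1] using (hG.continuousAt.tendsto.comp hq).prodMk_nhds
      (hwlim.fst_nhds.sub (hΦ.continuousAt.tendsto.comp hx))
  · refine Tendsto.prodMk_nhds ?_ (hxdir.prodMk_nhds hwdir.snd_nhds)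
    rw [← Prod.mk_zero_zero]
    simpa [smul_sub] using hGdir.prodMk_nhds (hwdir.fst_nhds.sub hΦdir)

theorem mem_gDeriv_perturbedSolMap_iff (hsol : (x₀, μ₀) ∈ perturbedSolMap G Φ T 0)
    (hG : HasFDerivAt G DG (x₀, μ₀)) (hΦ : HasFDerivAt Φ DΦ x₀) :
    (ξ, η) ∈ gDeriv (perturbedSolMap G Φ T) 0 (x₀, μ₀) 0 ↔
      DG (ξ, η) = 0 ∧ η ∈ gDeriv T (Φ x₀) μ₀ (DΦ ξ) :=
  ⟨mem_gDeriv_of_mem_gDeriv_perturbedSolMap hsol hG hΦ,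
    fun h => mem_gDeriv_perturbedSolMap_of_mem_gDeriv hsol hG hΦ h.1 h.2⟩

theorem isolCalm_perturbedSolMap_iff [ProperSpace X] [ProperSpace M]
    (hsol : (x₀, μ₀) ∈ perturbedSolMap G Φ T 0) (hG : HasFDerivAt G DG (x₀, μ₀))
    (hΦ : HasFDerivAt Φ DΦ x₀) :
    IsolCalm (perturbedSolMap G Φ T) 0 (x₀, μ₀) ↔
      ∀ ξ η, DG (ξ, η) = 0 ∧ η ∈ gDeriv T (Φ x₀) μ₀ (DΦ ξ) → ξ = 0 ∧ η = 0 := by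
  rw [isolCalm_iff_gDeriv_zero, Prod.forall]
  refine forall₂_congr fun ξ η => ?_
  rw [mem_gDeriv_perturbedSolMap_iff hsol hG hΦ, Prod.mk_eq_zero]

end PerturbedSolMap

section KKT

open ContinuousLinearMap InnerProductSpace

/-- `InnerProductSpace.toDual` and `ContinuousLinearMap.adjoint` are only conjugate-linear
isometries, which over `ℝ` are linear in fact. -/
theorem LinearIsometryEquiv.isBoundedLinearMap_real {E F : Type*} [NormedAddCommGroup E]
    [NormedSpace ℝ E] [NormedAddCommGroup F] [NormedSpace ℝ F] (e : E ≃ₗᵢ⋆[ℝ] F) :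
    IsBoundedLinearMap ℝ e :=
  ⟨⟨map_add e, fun c x => by simp [e.map_smulₛₗ]⟩, 1, one_pos, fun x => by simp⟩

variable {n m : ℕ} (B : Evec m →L[ℝ] Evec m) {φ₀ : Evec n → ℝ} {Φ : Evec n → Evec m}

noncomputable def kktResidual (φ₀ : Evec n → ℝ) (Φ : Evec n → Evec m) (q : Evec n × Evec m) :
    Evec n :=
  gradient (fun x => Lag B φ₀ Φ x q.2) q.1

theorem kktResidual_eq {x : Evec n} (hφ₀ : DifferentiableAt ℝ φ₀ x)
    (hΦ : DifferentiableAt ℝ Φ x) (μ : Evec m) :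
    kktResidual B φ₀ Φ (x, μ) = gradient φ₀ x + adjoint (fderiv ℝ Φ x) μ := by
  have hpair : HasFDerivAt (fun x' => ⟪Φ x', μ⟫) ((innerSL ℝ μ).comp (fderiv ℝ Φ x)) x := by
    simpa only [Function.comp_def, innerSL_apply_apply, real_inner_comm μ] using
      (innerSL ℝ μ).hasFDerivAt.comp x hΦ.hasFDerivAt
  have hLag : HasFDerivAt (fun x' => Lag B φ₀ Φ x' μ)
      (fderiv ℝ φ₀ x + (innerSL ℝ μ).comp (fderiv ℝ Φ x)) x :=
    (hφ₀.hasFDerivAt.add hpair).sub_const _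
  refine (hasGradientAt_iff_hasFDerivAt.2 (hLag.congr_fderiv ?_)).gradient
  ext ξ
  simp [adjoint_inner_left]

theorem differentiable_kktResidual (hφ₀ : ContDiff ℝ 2 φ₀) (hΦ : ContDiff ℝ 2 Φ) :
    Differentiable ℝ (kktResidual B φ₀ Φ) := by
  have hφ₀' := (hφ₀.fderiv_right (m := 1) le_rfl).differentiable one_ne_zero
  have hΦ' := (hΦ.fderiv_right (m := 1) le_rfl).differentiable one_ne_zero
  have hgrad : Differentiable ℝ (gradient φ₀) :=
    ((toDual ℝ (Evec n)).symm.isBoundedLinearMap_real.differentiable.comp hφ₀')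
  have hadj : Differentiable ℝ fun x => adjoint (fderiv ℝ Φ x) :=
    (adjoint : (Evec n →L[ℝ] Evec m) ≃ₗᵢ⋆[ℝ] _).isBoundedLinearMap_real.differentiable.comp hΦ'
  intro q
  have hq : kktResidual B φ₀ Φ = fun q => gradient φ₀ q.1 + adjoint (fderiv ℝ Φ q.1) q.2 :=
    funext fun q => kktResidual_eq B (hφ₀.differentiable two_ne_zero q.1)
      (hΦ.differentiable two_ne_zero q.1) q.2
  rw [hq]
  exact ((hgrad _).comp q differentiableAt_fst).add
    (((hadj _).comp q differentiableAt_fst).clm_apply differentiableAt_snd)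

theorem fderiv_kktResidual_apply (hφ₀ : ContDiff ℝ 2 φ₀) (hΦ : ContDiff ℝ 2 Φ) (x : Evec n)
    (μ : Evec m) (ξ : Evec n) (η : Evec m) :
    fderiv ℝ (kktResidual B φ₀ Φ) (x, μ) (ξ, η) =
      hessL B φ₀ Φ x μ ξ + adjoint (fderiv ℝ Φ x) η := by
  have hD := (differentiable_kktResidual B hφ₀ hΦ (x, μ)).hasFDerivAt
  have hpartial : HasFDerivAt (fun x' => kktResidual B φ₀ Φ (x', μ))
      ((fderiv ℝ (kktResidual B φ₀ Φ) (x, μ)).comp (inl ℝ _ _)) x :=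
    HasFDerivAt.comp (g := kktResidual B φ₀ Φ) x hD (hasFDerivAt_prodMk_left (𝕜 := ℝ) x μ)
  have hx : hessL B φ₀ Φ x μ = (fderiv ℝ (kktResidual B φ₀ Φ) (x, μ)).comp (inl ℝ _ _) :=
    hpartial.fderiv
  have haffine : HasFDerivAt (fun μ' => kktResidual B φ₀ Φ (x, μ')) (adjoint (fderiv ℝ Φ x)) μ := by
    simp only [kktResidual_eq B (hφ₀.differentiable two_ne_zero x)
      (hΦ.differentiable two_ne_zero x)]
    exact (adjoint (fderiv ℝ Φ x)).hasFDerivAt.const_add _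
  have hμ : adjoint (fderiv ℝ Φ x) = (fderiv ℝ (kktResidual B φ₀ Φ) (x, μ)).comp (inr ℝ _ _) :=
    haffine.unique (HasFDerivAt.comp (g := kktResidual B φ₀ Φ) μ hD
      (hasFDerivAt_prodMk_right (𝕜 := ℝ) x μ))
  rw [hx, hμ, comp_apply, comp_apply, ← map_add, inl_apply, inr_apply, Prod.mk_add_mk,
    add_zero, zero_add]

theorem SKKT_eq_perturbedSolMap (Y : Set (Evec m)) :
    SKKT Y B φ₀ Φ = perturbedSolMap (kktResidual B φ₀ Φ) Φ (subdiff (thetaY Y B)) :=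
  rfl

end KKT

theorem isolatedCalm_characterization_general {n m : ℕ} (Y : Set (Evec m))
    (B : Evec m →L[ℝ] Evec m)
    (φ₀ : Evec n → ℝ) (hφ₀ : ContDiff ℝ 2 φ₀)
    (Φ : Evec n → Evec m) (hΦ : ContDiff ℝ 2 Φ)
    (xo : Evec n) (lmo : Evec m)
    (hkkt : (xo, lmo) ∈ SKKT Y B φ₀ Φ ((0, 0) : Evec n × Evec m)) :
    IsolCalm (SKKT Y B φ₀ Φ) ((0, 0) : Evec n × Evec m) (xo, lmo) ↔
      ∀ (ξ : Evec n) (η : Evec m),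
        (hessL B φ₀ Φ xo lmo ξ + ContinuousLinearMap.adjoint (fderiv ℝ Φ xo) η = 0 ∧
          η ∈ gDeriv (subdiff (thetaY Y B)) (Φ xo) lmo (fderiv ℝ Φ xo ξ)) →
        ξ = 0 ∧ η = 0 := by
  rw [SKKT_eq_perturbedSolMap] at hkkt ⊢
  simp only [← fderiv_kktResidual_apply B hφ₀ hΦ]
  exact isolCalm_perturbedSolMap_iff hkkt
    (differentiable_kktResidual B hφ₀ hΦ (xo, lmo)).hasFDerivAt
    (hΦ.differentiable two_ne_zero xo).hasFDerivAt

/-- Graphical-derivative characterization of isolated calmness of the KKT solution map. -/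
theorem isolatedCalm_characterization {n m : ℕ} (Y : Set (Evec m)) (hYne : Y.Nonempty) (hYpoly : IsPolyhedral Y)
    (B : Evec m →L[ℝ] Evec m) (hBsym : ∀ u v : Evec m, ⟪B u, v⟫ = ⟪u, B v⟫)
    (hBpsd : ∀ u : Evec m, 0 ≤ ⟪u, B u⟫)
    (φ₀ : Evec n → ℝ) (hφ₀ : ContDiff ℝ 2 φ₀)
    (Φ : Evec n → Evec m) (hΦ : ContDiff ℝ 2 Φ)
    (xo : Evec n) (lmo : Evec m)
    (hkkt : (xo, lmo) ∈ SKKT Y B φ₀ Φ ((0, 0) : Evec n × Evec m)) :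
    IsolCalm (SKKT Y B φ₀ Φ) ((0, 0) : Evec n × Evec m) (xo, lmo) ↔
      ∀ (ξ : Evec n) (η : Evec m),
        (hessL B φ₀ Φ xo lmo ξ + ContinuousLinearMap.adjoint (fderiv ℝ Φ xo) η = 0 ∧
          η ∈ gDeriv (subdiff (thetaY Y B)) (Φ xo) lmo (fderiv ℝ Φ xo ξ)) →
        ξ = 0 ∧ η = 0 :=
  isolatedCalm_characterization_general Y B φ₀ hφ₀ Φ hΦ xo lmo hkkt
end
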